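/- (Stability of Open Multi-Agent Systems.) Let {V_k}_{k≥0} be a sequence of nonempty finite sets of integers, and for each k let x_k, xᵉ_k : V_k → ℝ. Let γ ∈ [0,1), B, H ≥ 0 and β > γ, and assume for every k ≥ 0: (i) sqrt( Σ_{v ∈ V_k ∩ V_{k+1}} (x_{k+1,v} − xᵉ_{k,v})² ) ≤ γ · d(x_k, xᵉ_k); (ii) d(xᵉ_{k+1}, xᵉ_k) ≤ sqrt(|V_{k+1}|) · B; (iii) sqrt( Σ_{v ∈ V_{k+1} \ V_k} (x_{k+1,v} − xᵉ_{k+1,v})² ) ≤ sqrt(|V_{k+1}|) · H; (iv) |V_{k+1}| ≥ β² · |V_k|. Set R = (B + H)/(1 − γ/β). Then the trajectory of points of interest is open stable with stability radius R: for every ε > R there exists δ > 0 such that if d(x_0, xᵉ_0)/sqrt(|V_0|) < δ, then d(x_k, xᵉ_k)/sqrt(|V_k|) < ε for every k ≥ 0. -/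

import Mathlib

open Finset

/-- The open distance between two vectors `x : V₁ → ℝ` and `y : V₂ → ℝ`
(encoded as functions `ℤ → ℝ` together with their index sets `V₁, V₂`). -/
noncomputable def openDist (V₁ V₂ : Finset ℤ) (x y : ℤ → ℝ) : ℝ :=
  Real.sqrt ((∑ v ∈ V₁ ∩ V₂, (x v - y v) ^ 2) +
    (∑ v ∈ V₁ \ V₂, (x v) ^ 2) + (∑ v ∈ V₂ \ V₁, (y v) ^ 2))

/-
Write `a_k = d(x_k, xᵉ_k) / √|V_k|` for the error per agent. Splitting `V_{k+1}` into agents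
that stayed and agents that joined, Minkowski's inequality together with (i)–(iii) gives
`d(x_{k+1}, xᵉ_{k+1}) ≤ γ d(x_k, xᵉ_k) + √|V_{k+1}| (B + H)`, and (iv) turns this into the
affine recursion `a_{k+1} ≤ (γ/β) a_k + (B + H)` with `γ/β < 1`. Every `ε > R` makes the
interval `[0, ε)` invariant under this recursion, so `δ = ε` works.
-/

lemma Real.sqrt_add_le_sqrt_add_sqrt {a b : ℝ} (ha : 0 ≤ a) (hb : 0 ≤ b) :
    √(a + b) ≤ √a + √b :=
  Real.sqrt_le_iff.mpr ⟨by positivity, by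
    nlinarith [Real.sq_sqrt ha, Real.sq_sqrt hb, Real.sqrt_nonneg a, Real.sqrt_nonneg b]⟩

lemma Finset.sqrt_sum_sub_sq_le {ι : Type*} (s : Finset ι) (f g : ι → ℝ) :
    √(∑ i ∈ s, (f i - g i) ^ 2) ≤ √(∑ i ∈ s, f i ^ 2) + √(∑ i ∈ s, g i ^ 2) := by
  have := Real.Lp_add_le s f (-g) (p := 2) one_le_two
  simp only [Real.sqrt_eq_rpow, Pi.neg_apply, ← sub_eq_add_neg, abs_neg, one_div] at this ⊢
  simpa only [Real.rpow_two, sq_abs] using this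

lemma openDist_self (V : Finset ℤ) (x y : ℤ → ℝ) :
    openDist V V x y = √(∑ v ∈ V, (x v - y v) ^ 2) := by
  simp [openDist]

lemma sqrt_sum_inter_sq_le_openDist (V W : Finset ℤ) (x y : ℤ → ℝ) :
    √(∑ v ∈ V ∩ W, (x v - y v) ^ 2) ≤ openDist V W x y :=
  Real.sqrt_le_sqrt <| by
    have h₁ : 0 ≤ ∑ v ∈ V \ W, x v ^ 2 := sum_nonneg fun _ _ => sq_nonneg _
    have h₂ : 0 ≤ ∑ v ∈ W \ V, y v ^ 2 := sum_nonneg fun _ _ => sq_nonneg _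
    linarith

/-- `V`, `e` are the agents and point of interest before a step; `W`, `x'`, `e'` the agents,
state and point of interest after it. -/
lemma openDist_self_le_of_step (V W : Finset ℤ) (x' e e' : ℤ → ℝ) :
    openDist W W x' e' ≤ √(∑ v ∈ V ∩ W, (x' v - e v) ^ 2) + openDist W V e' e +
      √(∑ v ∈ W \ V, (x' v - e' v) ^ 2) := by
  have hstay : √(∑ v ∈ W ∩ V, (x' v - e' v) ^ 2) ≤
      √(∑ v ∈ V ∩ W, (x' v - e v) ^ 2) + openDist W V e' e := by
    calc √(∑ v ∈ W ∩ V, (x' v - e' v) ^ 2)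
        = √(∑ v ∈ W ∩ V, ((x' v - e v) - (e' v - e v)) ^ 2) := by
          simp only [sub_sub_sub_cancel_right]
      _ ≤ √(∑ v ∈ W ∩ V, (x' v - e v) ^ 2) + √(∑ v ∈ W ∩ V, (e' v - e v) ^ 2) :=
          sqrt_sum_sub_sq_le _ _ _
      _ ≤ √(∑ v ∈ V ∩ W, (x' v - e v) ^ 2) + openDist W V e' e := by
          rw [inter_comm W V]
          gcongr
          rw [inter_comm V W]
          exact sqrt_sum_inter_sq_le_openDist W V e' e
  calc openDist W W x' e'
      = √((∑ v ∈ W ∩ V, (x' v - e' v) ^ 2) + ∑ v ∈ W \ V, (x' v - e' v) ^ 2) := by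
        rw [openDist_self, sum_inter_add_sum_sdiff]
    _ ≤ √(∑ v ∈ W ∩ V, (x' v - e' v) ^ 2) + √(∑ v ∈ W \ V, (x' v - e' v) ^ 2) :=
        Real.sqrt_add_le_sqrt_add_sqrt (sum_nonneg fun _ _ => sq_nonneg _)
          (sum_nonneg fun _ _ => sq_nonneg _)
    _ ≤ _ := by linarith

lemma div_le_div_mul_div_add {d d' s s' γ β c : ℝ} (hd : 0 ≤ d) (hγ : 0 ≤ γ) (hβ : 0 < β)
    (hs : 0 < s) (hss : β * s ≤ s') (h : d' ≤ γ * d + s' * c) :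
    d' / s' ≤ γ / β * (d / s) + c := by
  have hs' : 0 < s' := lt_of_lt_of_le (by positivity) hss
  rw [div_le_iff₀ hs']
  calc d' ≤ γ / β * (d / s) * (β * s) + s' * c := by
        convert h using 2; field_simp
    _ ≤ γ / β * (d / s) * s' + s' * c := by gcongr
    _ = (γ / β * (d / s) + c) * s' := by ring

lemma forall_lt_of_le_mul_add {a : ℕ → ℝ} {q c ε : ℝ} (hq : 0 ≤ q) (hc : c < (1 - q) * ε)
    (h₀ : a 0 < ε) (hstep : ∀ k, a (k + 1) ≤ q * a k + c) : ∀ k, a k < ε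
  | 0 => h₀
  | k + 1 => by
    have := mul_le_mul_of_nonneg_left (forall_lt_of_le_mul_add hq hc h₀ hstep k).le hq
    linarith [hstep k]

theorem openMAS_stability_general (V : ℕ → Finset ℤ)
    (hV : ∀ k, (V k).Nonempty) (x xe : ℕ → ℤ → ℝ)
    (γ B H β : ℝ) (hγ0 : 0 ≤ γ)
    (hβ : β > γ)
    (hcontr : ∀ k, Real.sqrt (∑ v ∈ V k ∩ V (k + 1), (x (k + 1) v - xe k v) ^ 2) ≤
      γ * openDist (V k) (V k) (x k) (xe k))
    (hvar : ∀ k, openDist (V (k + 1)) (V k) (xe (k + 1)) (xe k) ≤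
      Real.sqrt ((V (k + 1)).card) * B)
    (hjoin : ∀ k, Real.sqrt (∑ v ∈ V (k + 1) \ V k, (x (k + 1) v - xe (k + 1) v) ^ 2) ≤
      Real.sqrt ((V (k + 1)).card) * H)
    (hcard : ∀ k, ((V (k + 1)).card : ℝ) ≥ β ^ 2 * ((V k).card : ℝ)) :
    ∀ ε > (B + H) / (1 - γ / β), ∃ δ > 0,
      openDist (V 0) (V 0) (x 0) (xe 0) / Real.sqrt ((V 0).card) < δ →
        ∀ k, openDist (V k) (V k) (x k) (xe k) / Real.sqrt ((V k).card) < ε := by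
  intro ε hε
  have hsize k : 0 < √((V k).card : ℝ) := Real.sqrt_pos.mpr (by simpa using hV k)
  have hB : 0 ≤ B := nonneg_of_mul_nonneg_right ((Real.sqrt_nonneg _).trans (hvar 0)) (hsize 1)
  have hH : 0 ≤ H := nonneg_of_mul_nonneg_right ((Real.sqrt_nonneg _).trans (hjoin 0)) (hsize 1)
  have hβ0 : 0 < β := hγ0.trans_lt hβ
  have hq : 0 < 1 - γ / β := sub_pos.mpr ((div_lt_one hβ0).mpr hβ)
  have hε0 : 0 < ε := (div_nonneg (add_nonneg hB hH) hq.le).trans_lt hε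
  have hBH : B + H < (1 - γ / β) * ε := by rwa [gt_iff_lt, div_lt_iff₀ hq, mul_comm] at hε
  have hgrowth k : β * √((V k).card : ℝ) ≤ √((V (k + 1)).card : ℝ) :=
    (Real.le_sqrt (by positivity) (by positivity)).mpr <| by
      rw [mul_pow, Real.sq_sqrt (by positivity)]; exact hcard k
  refine ⟨ε, hε0, fun h₀ => forall_lt_of_le_mul_add (div_nonneg hγ0 hβ0.le) hBH h₀ fun k => ?_⟩
  refine div_le_div_mul_div_add (Real.sqrt_nonneg _) hγ0 hβ0 (hsize k) (hgrowth k) ?_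
  have := openDist_self_le_of_step (V k) (V (k + 1)) (x (k + 1)) (xe k) (xe (k + 1))
  linarith [hcontr k, hvar k, hjoin k, mul_add √((V (k + 1)).card : ℝ) B H]

/-- Stability of open multi-agent systems: under contractivity, bounded variation
of the trajectory of points of interest, bounded join process and bounded decrease
of the number of agents, the trajectory of points of interest is open stable
with stability radius `R = (B + H) / (1 - γ/β)`. -/
theorem openMAS_stability (V : ℕ → Finset ℤ)
    (hV : ∀ k, (V k).Nonempty) (x xe : ℕ → ℤ → ℝ)
    (γ B H β : ℝ) (hγ0 : 0 ≤ γ) (hγ1 : γ < 1) (hB : 0 ≤ B) (hH : 0 ≤ H)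
    (hβ : β > γ)
    (hcontr : ∀ k, Real.sqrt (∑ v ∈ V k ∩ V (k + 1), (x (k + 1) v - xe k v) ^ 2) ≤
      γ * openDist (V k) (V k) (x k) (xe k))
    (hvar : ∀ k, openDist (V (k + 1)) (V k) (xe (k + 1)) (xe k) ≤
      Real.sqrt ((V (k + 1)).card) * B)
    (hjoin : ∀ k, Real.sqrt (∑ v ∈ V (k + 1) \ V k, (x (k + 1) v - xe (k + 1) v) ^ 2) ≤
      Real.sqrt ((V (k + 1)).card) * H)
    (hcard : ∀ k, ((V (k + 1)).card : ℝ) ≥ β ^ 2 * ((V k).card : ℝ)) :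
    ∀ ε > (B + H) / (1 - γ / β), ∃ δ > 0,
      openDist (V 0) (V 0) (x 0) (xe 0) / Real.sqrt ((V 0).card) < δ →
        ∀ k, openDist (V k) (V k) (x k) (xe k) / Real.sqrt ((V k).card) < ε :=
  openMAS_stability_general V hV x xe γ B H β hγ0 hβ hcontr hvar hjoin hcard
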